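/- Let α > −1/2, let m ≥ 1 be a natural number, let p₁ < p₂ < ⋯ < p_m be real numbers with P = {p₁, …, p_m}, and let u be twice differentiable on ℝ ∖ P and satisfy u''(x) = 2u(x)³ + x·u(x) − α there, with alternating simple poles starting with residue +1: (x − p_j)·u(x) → (−1)^{j+1} as x → p_j for each j. Suppose f(x) := 2u(x)² − 2u'(x) + x satisfies: f(x) → −∞ as x → −∞; f(x) → +∞ as x → +∞; f(x) → +∞ as x → p_j for each odd index j; and f(x)/(x − p_j) → −(2α+1) as x → p_j for each even index j. Let Z denote the set of zeros of f in ℝ ∖ P and let Q = Z ∪ {p_j : j odd}. Then Q has exactly m + 1 elements, and the Bäcklund transform v(x) := −u(x) + (2α+1)/f(x), defined on ℝ ∖ (P ∪ Z), satisfies: (x − q)·v(x) → +1 as x → q for each q ∈ Z, (x − q)·v(x) → −1 as x → q for each odd-indexed pole q = p_{2k−1}, and (x − q)·v(x) → 0 as x → q for each even-indexed pole q = p_{2k}. Moreover, when the m + 1 points of Q are listed in increasing order, these limits alternate +1, −1, +1, … starting with +1; the smallest element of Q is strictly less than p₁; and the largest element of Q equals p_m if m is odd and is strictly greater than p_m if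 m is even. -/

import Mathlib

/-!
Along a solution of PII, `f' = (2α + 1) - 2 u f`, so `f' = 2α + 1 > 0` at every zero of `f`:
zeros are upward crossings, and on a pole-free interval `f` has at most one zero and none to the
right of a point where it is positive. Just right of an odd pole `f = +∞`, so odd gaps contain no
zero. An even gap starts with `f < 0` (at `-∞`, or just right of an even pole, where
`f ~ -(2α + 1)(x - p)`) and ends with `f > 0` (just left of the next odd pole, or at `+∞`), so it
contains exactly one zero. At that zero `(x - z) v → 1`, because `f / (x - z) → 2α + 1` and `u`
is regular; at an odd pole `(2α + 1) / f → 0` and only the residue `-1` of `-u` survives; at an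
even pole the residue `+1` of `-u` and the residue `-1` of `(2α + 1) / f` cancel. Interlacing
the zeros with the odd poles gives the alternating list.
-/

open Filter Topology Set

/-- The auxiliary function `f(x) = 2 u(x)^2 - 2 u'(x) + x` appearing in the
Bäcklund transformation for Painlevé II. -/
def piiF (u u' : ℝ → ℝ) : ℝ → ℝ := fun x => 2 * (u x) ^ 2 - 2 * u' x + x

/-- The Bäcklund transform `v(x) = -u(x) + (2α+1)/f(x)` of a solution `u`
of Painlevé II with parameter `α`. -/
noncomputable def backlund (α : ℝ) (u u' : ℝ → ℝ) : ℝ → ℝ :=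
  fun x => -u x + (2 * α + 1) / piiF u u' x

/-- The pole set `P = {p 1, …, p m}` of a solution with `m` real poles,
indexed by `1, …, m`. -/
def poleSet (m : ℕ) (p : ℕ → ℝ) : Set ℝ := {x : ℝ | ∃ j, 1 ≤ j ∧ j ≤ m ∧ p j = x}

def ZerosCrossUpOn (f : ℝ → ℝ) (S : Set ℝ) : Prop :=
  ∀ x ∈ S, f x = 0 → ∃ d > 0, HasDerivAt f d x

section CrossUp

variable {f : ℝ → ℝ} {d x : ℝ} {S T : Set ℝ}

theorem HasDerivAt.eventually_nhdsLT_neg (hf : HasDerivAt f d x) (hd : 0 < d) (hx : f x = 0) :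
    ∀ᶠ y in 𝓝[<] x, f y < 0 := by
  filter_upwards [nhdsLT_le_nhdsNE x
      ((hasDerivAt_iff_tendsto_slope.mp hf).eventually (eventually_gt_nhds hd)),
    self_mem_nhdsWithin] with y hslope hy
  exact neg_of_slope_pos hy hslope hx

theorem HasDerivAt.eventually_nhdsGT_pos (hf : HasDerivAt f d x) (hd : 0 < d) (hx : f x = 0) :
    ∀ᶠ y in 𝓝[>] x, 0 < f y := by
  filter_upwards [nhdsGT_le_nhdsNE x
      ((hasDerivAt_iff_tendsto_slope.mp hf).eventually (eventually_gt_nhds hd)),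
    self_mem_nhdsWithin] with y hslope hy
  exact pos_of_slope_pos hy hslope hx

theorem ZerosCrossUpOn.mono (hf : ZerosCrossUpOn f S) (hTS : T ⊆ S) : ZerosCrossUpOn f T :=
  fun x hx => hf x (hTS hx)

/-- At the first zero of `f` after `a`, `f` would have to arrive from below. -/
theorem ZerosCrossUpOn.pos_of_le [S.OrdConnected] (hf : ZerosCrossUpOn f S)
    (hcont : ContinuousOn f S) {a b : ℝ} (ha : a ∈ S) (hb : b ∈ S) (hab : a ≤ b)
    (hfa : 0 < f a) : 0 < f b := by
  by_contra! hfb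
  have hsub : Icc a b ⊆ S := Set.OrdConnected.out ‹_› ha hb
  obtain ⟨c, hc, hfc⟩ := intermediate_value_Icc' hab (hcont.mono hsub) ⟨hfb, hfa.le⟩
  have hclosed : IsClosed (Icc a b ∩ f ⁻¹' {0}) :=
    (hcont.mono hsub).preimage_isClosed_of_isClosed isClosed_Icc isClosed_singleton
  obtain ⟨s, ⟨hs, hfs⟩, hleast⟩ :=
    (isCompact_Icc.of_isClosed_subset hclosed inter_subset_left).exists_isLeast ⟨c, hc, hfc⟩
  have has : a < s := hs.1.lt_of_ne (by rintro rfl; exact hfa.ne' hfs)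
  obtain ⟨d, hd, hder⟩ := hf s (hsub hs) hfs
  obtain ⟨y, hfy, hy⟩ := ((hder.eventually_nhdsLT_neg hd hfs).and (Ioo_mem_nhdsLT has)).exists
  have hyb : y ≤ b := hy.2.le.trans hs.2
  obtain ⟨c', hc', hfc'⟩ := intermediate_value_Icc' hy.1.le
    (hcont.mono ((Icc_subset_Icc_right hyb).trans hsub)) ⟨hfy.le, hfa.le⟩
  have hsc : s ≤ c' := hleast ⟨⟨hc'.1, hc'.2.trans hyb⟩, hfc'⟩
  linarith [hc'.2, hy.2]

theorem ZerosCrossUpOn.existsUnique_zero [S.OrdConnected] (hf : ZerosCrossUpOn f S)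
    (hcont : ContinuousOn f S) (hneg : ∃ a ∈ S, f a < 0) (hpos : ∃ b ∈ S, 0 < f b) :
    ∃! z, z ∈ S ∧ f z = 0 := by
  obtain ⟨a, ha, hfa⟩ := hneg
  obtain ⟨b, hb, hfb⟩ := hpos
  obtain ⟨z, hz, hfz⟩ :=
    (Set.OrdConnected.isPreconnected ‹_›).intermediate_value ha hb hcont ⟨hfa.le, hfb.le⟩
  have hnot : ∀ y ∈ S, ∀ z ∈ S, f y = 0 → f z = 0 → ¬ y < z := by
    intro y hy z hz hfy hfz hyz
    obtain ⟨d, hd, hder⟩ := hf y hy hfy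
    obtain ⟨t, hft, ht⟩ := ((hder.eventually_nhdsGT_pos hd hfy).and (Ioo_mem_nhdsGT hyz)).exists
    have htS : t ∈ S := Set.OrdConnected.out ‹_› hy hz ⟨ht.1.le, ht.2.le⟩
    exact (hf.pos_of_le hcont htS hz ht.2.le hft).ne' hfz
  refine ⟨z, ⟨hz, hfz⟩, fun y ⟨hy, hfy⟩ => ?_⟩
  exact le_antisymm (not_lt.mp (hnot z hz y hy hfz hfy)) (not_lt.mp (hnot y hy z hz hfy hfz))

end CrossUp

/-- The `j`-th gap `(p j, p (j + 1))` between consecutive poles, where `p 0 = -∞` and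
`p (m + 1) = +∞`. -/
def gap (m : ℕ) (p : ℕ → ℝ) (j : ℕ) : Set ℝ :=
  {x | (j ≠ 0 → p j < x) ∧ (j < m → x < p (j + 1))}

section Gaps

variable {m j : ℕ} {p : ℕ → ℝ} {x : ℝ}

instance ordConnected_gap (m : ℕ) (p : ℕ → ℝ) (j : ℕ) : (gap m p j).OrdConnected :=
  ⟨fun _ ha _ hb _ hx => ⟨fun h => (ha.1 h).trans_le hx.1, fun h => hx.2.trans_lt (hb.2 h)⟩⟩

theorem gap_subset_compl_poleSet (hp : StrictMonoOn p (Icc 1 m)) (hj : j ≤ m) :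
    gap m p j ⊆ (poleSet m p)ᶜ := by
  rintro x ⟨hlo, hhi⟩ ⟨i, hi1, him, rfl⟩
  rcases le_or_gt i j with hij | hji
  · exact (hlo (by omega)).not_ge (hp.monotoneOn ⟨hi1, him⟩ ⟨by omega, hj⟩ hij)
  · exact (hhi (by omega)).not_ge (hp.monotoneOn ⟨by omega, by omega⟩ ⟨hi1, him⟩ hji)

theorem exists_mem_gap (hx : x ∉ poleSet m p) : ∃ j ≤ m, x ∈ gap m p j := by
  classical
  have hex : ∃ k, k = m ∨ x < p (k + 1) := ⟨m, Or.inl rfl⟩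
  have hjm : Nat.find hex ≤ m := Nat.find_min' hex (Or.inl rfl)
  refine ⟨Nat.find hex, hjm, fun hj0 => ?_, fun hlt => (Nat.find_spec hex).resolve_left hlt.ne⟩
  obtain ⟨k, hk⟩ := Nat.exists_eq_succ_of_ne_zero hj0
  have hkmin := Nat.find_min hex (hk ▸ Nat.lt_succ_self k)
  push Not at hkmin
  rw [hk]
  exact hkmin.2.lt_of_ne fun h => hx ⟨k + 1, by omega, by omega, h⟩

theorem gap_mem_nhdsGT (hp : StrictMonoOn p (Icc 1 m)) (hj0 : j ≠ 0) (hj : j ≤ m) :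
    gap m p j ∈ 𝓝[>] p j := by
  rcases hj.lt_or_eq with hjm | rfl
  · filter_upwards [Ioo_mem_nhdsGT (hp ⟨by omega, hj⟩ ⟨by omega, hjm⟩ (lt_add_one j))]
      with x hx using ⟨fun _ => hx.1, fun _ => hx.2⟩
  · filter_upwards [self_mem_nhdsWithin] with x hx
      using ⟨fun _ => hx, fun h => (lt_irrefl _ h).elim⟩

theorem gap_mem_nhdsLT (hp : StrictMonoOn p (Icc 1 m)) (hj : j < m) :
    gap m p j ∈ 𝓝[<] p (j + 1) := by
  rcases eq_or_ne j 0 with rfl | hj0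
  · filter_upwards [self_mem_nhdsWithin] with x hx using ⟨fun h => absurd rfl h, fun _ => hx⟩
  · filter_upwards [Ioo_mem_nhdsLT (hp ⟨by omega, hj.le⟩ ⟨by omega, hj⟩ (lt_add_one j))]
      with x hx using ⟨fun _ => hx.1, fun _ => hx.2⟩

theorem gap_zero_mem_atBot : gap m p 0 ∈ atBot := by
  filter_upwards [eventually_lt_atBot (p 1)] with x hx
    using ⟨fun h => absurd rfl h, fun _ => hx⟩

theorem gap_self_mem_atTop : gap m p m ∈ atTop := by
  filter_upwards [eventually_gt_atTop (p m)] with x hx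
    using ⟨fun _ => hx, fun h => (lt_irrefl _ h).elim⟩

end Gaps

section Zeros

variable {m : ℕ} {p : ℕ → ℝ} {f : ℝ → ℝ} {c : ℝ}

theorem pos_of_mem_gap_of_tendsto_atTop (hp : StrictMonoOn p (Icc 1 m))
    (hcont : ContinuousOn f (poleSet m p)ᶜ) (hf : ZerosCrossUpOn f (poleSet m p)ᶜ) {j : ℕ}
    (hj0 : j ≠ 0) (hj : j ≤ m) (hpole : Tendsto f (𝓝[≠] p j) atTop) {x : ℝ}
    (hx : x ∈ gap m p j) : 0 < f x := by
  have hsub := gap_subset_compl_poleSet hp hj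
  have hpos := (hpole.eventually (eventually_gt_atTop 0)).filter_mono (nhdsGT_le_nhdsNE _)
  obtain ⟨t, hft, htgap, ht⟩ :=
    (hpos.and (Eventually.and (gap_mem_nhdsGT hp hj0 hj) (Ioo_mem_nhdsGT (hx.1 hj0)))).exists
  exact (hf.mono hsub).pos_of_le (hcont.mono hsub) htgap hx ht.2.le hft

theorem exists_mem_gap_neg_of_even (hp : StrictMonoOn p (Icc 1 m))
    (hfbot : Tendsto f atBot atBot)
    (hfeven : ∀ j, 1 ≤ j → j ≤ m → Even j →
      Tendsto (fun x => f x / (x - p j)) (𝓝[≠] p j) (𝓝 (-c)))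
    (hc : 0 < c) {j : ℕ} (hj : j ≤ m) (heven : Even j) : ∃ a ∈ gap m p j, f a < 0 := by
  rcases eq_or_ne j 0 with rfl | hj0
  · obtain ⟨a, hfa, ha⟩ :=
      ((hfbot.eventually (eventually_lt_atBot 0)).and gap_zero_mem_atBot).exists
    exact ⟨a, ha, hfa⟩
  · have hslope := ((hfeven j (by omega) hj heven).eventually
      (eventually_lt_nhds (neg_neg_of_pos hc))).filter_mono (nhdsGT_le_nhdsNE _)
    obtain ⟨a, hfa, ha, hpa⟩ :=
      (hslope.and (Eventually.and (gap_mem_nhdsGT hp hj0 hj) self_mem_nhdsWithin)).exists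
    exact ⟨a, ha, by simpa using (div_lt_iff₀ (sub_pos.mpr hpa)).mp hfa⟩

theorem exists_mem_gap_pos_of_even (hp : StrictMonoOn p (Icc 1 m))
    (hftop : Tendsto f atTop atTop)
    (hfodd : ∀ j, 1 ≤ j → j ≤ m → Odd j → Tendsto f (𝓝[≠] p j) atTop)
    {j : ℕ} (hj : j ≤ m) (heven : Even j) : ∃ b ∈ gap m p j, 0 < f b := by
  rcases hj.lt_or_eq with hjm | rfl
  · have hpos := ((hfodd (j + 1) (by omega) hjm heven.add_one).eventually
      (eventually_gt_atTop 0)).filter_mono (nhdsLT_le_nhdsNE _)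
    obtain ⟨b, hfb, hb⟩ := (hpos.and (gap_mem_nhdsLT hp hjm)).exists
    exact ⟨b, hb, hfb⟩
  · obtain ⟨b, hfb, hb⟩ :=
      ((hftop.eventually (eventually_gt_atTop 0)).and gap_self_mem_atTop).exists
    exact ⟨b, hb, hfb⟩

theorem exists_zeros_eq_of_even_gaps (hp : StrictMonoOn p (Icc 1 m))
    (hcont : ContinuousOn f (poleSet m p)ᶜ) (hf : ZerosCrossUpOn f (poleSet m p)ᶜ)
    (hfbot : Tendsto f atBot atBot) (hftop : Tendsto f atTop atTop)
    (hfodd : ∀ j, 1 ≤ j → j ≤ m → Odd j → Tendsto f (𝓝[≠] p j) atTop)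
    (hfeven : ∀ j, 1 ≤ j → j ≤ m → Even j →
      Tendsto (fun x => f x / (x - p j)) (𝓝[≠] p j) (𝓝 (-c)))
    (hc : 0 < c) :
    ∃ ζ : ℕ → ℝ, (∀ j ≤ m, Even j → ζ j ∈ gap m p j) ∧
      {x | x ∉ poleSet m p ∧ f x = 0} = {x | ∃ j ≤ m, Even j ∧ ζ j = x} := by
  have huniq : ∀ j ≤ m, Even j → ∃! z, z ∈ gap m p j ∧ f z = 0 := fun j hj heven =>
    have hsub := gap_subset_compl_poleSet hp hj
    (hf.mono hsub).existsUnique_zero (hcont.mono hsub)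
      (exists_mem_gap_neg_of_even hp hfbot hfeven hc hj heven)
      (exists_mem_gap_pos_of_even hp hftop hfodd hj heven)
  have hex : ∀ j, ∃ z, j ≤ m → Even j → z ∈ gap m p j ∧ f z = 0 := by
    intro j
    by_cases h : j ≤ m ∧ Even j
    · exact (huniq j h.1 h.2).exists.imp fun z hz _ _ => hz
    · exact ⟨0, fun hj heven => (h ⟨hj, heven⟩).elim⟩
  choose ζ hζ using hex
  refine ⟨ζ, fun j hj heven => (hζ j hj heven).1, Set.ext fun x => ⟨?_, ?_⟩⟩
  · rintro ⟨hxP, hfx⟩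
    obtain ⟨j, hj, hxj⟩ := exists_mem_gap hxP
    have heven : Even j := by
      by_contra hodd
      rw [Nat.not_even_iff_odd] at hodd
      exact (pos_of_mem_gap_of_tendsto_atTop hp hcont hf hodd.pos.ne' hj
        (hfodd j hodd.pos hj hodd) hxj).ne' hfx
    exact ⟨j, hj, heven, (huniq j hj heven).unique (hζ j hj heven) ⟨hxj, hfx⟩⟩
  · rintro ⟨j, hj, heven, rfl⟩
    exact ⟨gap_subset_compl_poleSet hp hj (hζ j hj heven).1, (hζ j hj heven).2⟩

end Zeros

def interlace (m : ℕ) (p ζ : ℕ → ℝ) : Fin (m + 1) → ℝ :=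
  fun i => if Odd (i : ℕ) then p i else ζ i

section Interlace

variable {m : ℕ} {p ζ : ℕ → ℝ}

theorem interlace_of_odd {i : Fin (m + 1)} (h : Odd (i : ℕ)) : interlace m p ζ i = p i :=
  if_pos h

theorem interlace_of_even {i : Fin (m + 1)} (h : Even (i : ℕ)) : interlace m p ζ i = ζ i :=
  if_neg (Nat.not_odd_iff_even.mpr h)

theorem strictMono_interlace (hp : StrictMonoOn p (Icc 1 m))
    (hζ : ∀ j ≤ m, Even j → ζ j ∈ gap m p j) : StrictMono (interlace m p ζ) := by
  refine Fin.strictMono_iff_lt_succ.mpr fun i => ?_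
  have hi : (i : ℕ) < m := i.isLt
  rcases Nat.even_or_odd i with heven | hodd
  · rw [interlace_of_even (i := i.castSucc) heven, interlace_of_odd (i := i.succ) heven.add_one]
    exact (hζ i hi.le heven).2 hi
  · rw [interlace_of_odd (i := i.castSucc) hodd, interlace_of_even (i := i.succ) hodd.add_one]
    exact (hp ⟨hodd.pos, hi.le⟩ ⟨by omega, hi⟩ (lt_add_one _)).trans
      ((hζ _ hi hodd.add_one).1 (by omega))

theorem range_interlace :
    range (interlace m p ζ) =
      {x | ∃ j ≤ m, Even j ∧ ζ j = x} ∪ {x | ∃ j, 1 ≤ j ∧ j ≤ m ∧ Odd j ∧ p j = x} := by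
  ext x
  constructor
  · rintro ⟨i, rfl⟩
    rcases Nat.even_or_odd i with heven | hodd
    · exact Or.inl ⟨i, Nat.lt_succ_iff.mp i.isLt, heven, (interlace_of_even heven).symm⟩
    · exact Or.inr ⟨i, hodd.pos, Nat.lt_succ_iff.mp i.isLt, hodd, (interlace_of_odd hodd).symm⟩
  · rintro (⟨j, hj, heven, rfl⟩ | ⟨j, -, hj, hodd, rfl⟩)
    · exact ⟨⟨j, Nat.lt_succ_of_le hj⟩, interlace_of_even heven⟩
    · exact ⟨⟨j, Nat.lt_succ_of_le hj⟩, interlace_of_odd hodd⟩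

theorem tendsto_mul_interlace {g : ℝ → ℝ}
    (hζ : ∀ j ≤ m, Even j → Tendsto (fun x => (x - ζ j) * g x) (𝓝[≠] ζ j) (𝓝 1))
    (hp : ∀ j, 1 ≤ j → j ≤ m → Odd j →
      Tendsto (fun x => (x - p j) * g x) (𝓝[≠] p j) (𝓝 (-1)))
    (i : Fin (m + 1)) :
    Tendsto (fun x => (x - interlace m p ζ i) * g x) (𝓝[≠] interlace m p ζ i)
      (𝓝 ((-1) ^ (i : ℕ))) := by
  have hi : (i : ℕ) ≤ m := Nat.lt_succ_iff.mp i.isLt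
  rcases Nat.even_or_odd i with heven | hodd
  · rw [interlace_of_even heven, heven.neg_one_pow]
    exact hζ i hi heven
  · rw [interlace_of_odd hodd, hodd.neg_one_pow]
    exact hp i hodd.pos hi hodd

end Interlace

theorem HasDerivAt.tendsto_div_sub {f : ℝ → ℝ} {d x : ℝ} (hf : HasDerivAt f d x)
    (hx : f x = 0) : Tendsto (fun y => f y / (y - x)) (𝓝[≠] x) (𝓝 d) := by
  refine (hasDerivAt_iff_tendsto_slope.mp hf).congr fun y => ?_
  rw [slope_def_field, hx, sub_zero]

section Painleve

variable {α q r s x : ℝ} {u u' u'' : ℝ → ℝ}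

theorem hasDerivAt_piiF (hu : HasDerivAt u (u' x) x) (hu' : HasDerivAt u' (u'' x) x)
    (hPII : u'' x = 2 * u x ^ 3 + x * u x - α) :
    HasDerivAt (piiF u u') (2 * α + 1 - 2 * u x * piiF u u' x) x := by
  have hsq : HasDerivAt (fun y => u y ^ 2) (2 * u x * u' x) x := by
    simpa [mul_comm] using hu.fun_pow 2
  have h : HasDerivAt (piiF u u') (2 * (2 * u x * u' x) - 2 * u'' x + 1) x :=
    ((hsq.const_mul 2).sub (hu'.const_mul 2)).add (hasDerivAt_id x)
  convert h using 1
  rw [hPII, piiF]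
  ring

theorem mul_backlund_eq (α : ℝ) (u u' : ℝ → ℝ) (q x : ℝ) :
    (x - q) * backlund α u u' x = -((x - q) * u x) + (2 * α + 1) / (piiF u u' x / (x - q)) := by
  rw [backlund, div_div_eq_mul_div]
  ring

theorem tendsto_mul_backlund_of_tendsto_div
    (hu : Tendsto (fun x => (x - q) * u x) (𝓝[≠] q) (𝓝 r))
    (hf : Tendsto (fun x => piiF u u' x / (x - q)) (𝓝[≠] q) (𝓝 s)) (hs : s ≠ 0) :
    Tendsto (fun x => (x - q) * backlund α u u' x) (𝓝[≠] q)
      (𝓝 (-r + (2 * α + 1) / s)) := by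
  simpa only [mul_backlund_eq, Pi.div_apply] using hu.neg.add (tendsto_const_nhds.div hf hs)

theorem tendsto_mul_backlund_of_tendsto_atTop
    (hu : Tendsto (fun x => (x - q) * u x) (𝓝[≠] q) (𝓝 r))
    (hf : Tendsto (piiF u u') (𝓝[≠] q) atTop) :
    Tendsto (fun x => (x - q) * backlund α u u' x) (𝓝[≠] q) (𝓝 (-r)) := by
  have hsub : Tendsto (fun x => x - q) (𝓝[≠] q) (𝓝 0) := by
    simpa using ((continuous_sub_right q).tendsto q).mono_left nhdsWithin_le_nhds
  have h := hu.neg.add (hsub.mul ((tendsto_const_nhds (x := 2 * α + 1)).div_atTop hf))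
  simpa only [backlund, mul_add, mul_neg, mul_zero, add_zero] using h

theorem tendsto_mul_backlund_of_eq_zero (hu : ContinuousAt u q)
    (hf : HasDerivAt (piiF u u') (2 * α + 1) q) (hq : piiF u u' q = 0) (hα : 2 * α + 1 ≠ 0) :
    Tendsto (fun x => (x - q) * backlund α u u' x) (𝓝[≠] q) (𝓝 1) := by
  have hu0 : Tendsto (fun x => (x - q) * u x) (𝓝[≠] q) (𝓝 0) := by
    simpa using (((continuous_sub_right q).tendsto q).mul hu).mono_left nhdsWithin_le_nhds
  simpa [hα] using tendsto_mul_backlund_of_tendsto_div (α := α) hu0 (hf.tendsto_div_sub hq) hα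

end Painleve

/-- Theorems 1.1 and 1.2: let `α > -1/2` and let `u` solve
Painlevé II with parameter `α` on `ℝ ∖ {p 1, …, p m}` (`p 1 < ⋯ < p m`,
`m ≥ 1`) with alternating simple poles of residues `(-1)^{j+1}`, and assume
the stated limiting behaviour of `f = 2 u^2 - 2 u' + x` at `±∞` and at the
poles.  Let `Z` be the set of zeros of `f` off the pole set and
`Q = Z ∪ {p j : j odd}`.  Then `Q` has exactly `m + 1` elements, and the
Bäcklund transform `v = -u + (2α+1)/f` satisfies `(x-q) v(x) → +1` at each
`q ∈ Z`, `→ -1` at each odd-indexed pole, and `→ 0` at each even-indexed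
pole.  Listing `Q` in increasing order, these limits alternate
`+1, -1, +1, …` starting with `+1`; the smallest element of `Q` is `< p 1`;
and the largest element equals `p m` if `m` is odd and is `> p m` if `m` is
even. -/
theorem backlund_poles_alternate (α : ℝ) (hα : -1/2 < α) (m : ℕ) (hm : 1 ≤ m)
    (p : ℕ → ℝ) (hp : ∀ i j, 1 ≤ i → i < j → j ≤ m → p i < p j)
    (u u' u'' : ℝ → ℝ)
    (hu : ∀ x ∉ poleSet m p, HasDerivAt u (u' x) x)
    (hu' : ∀ x ∉ poleSet m p, HasDerivAt u' (u'' x) x)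
    (hPII : ∀ x ∉ poleSet m p, u'' x = 2 * (u x) ^ 3 + x * u x - α)
    (hpoles : ∀ j, 1 ≤ j → j ≤ m →
      Tendsto (fun x => (x - p j) * u x) (𝓝[≠] p j) (𝓝 ((-1 : ℝ) ^ (j + 1))))
    (hfbot : Tendsto (piiF u u') atBot atBot)
    (hftop : Tendsto (piiF u u') atTop atTop)
    (hfodd : ∀ j, 1 ≤ j → j ≤ m → Odd j →
      Tendsto (piiF u u') (𝓝[≠] p j) atTop)
    (hfeven : ∀ j, 1 ≤ j → j ≤ m → Even j →
      Tendsto (fun x => piiF u u' x / (x - p j)) (𝓝[≠] p j)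
        (𝓝 (-(2 * α + 1)))) :
    ({x | x ∉ poleSet m p ∧ piiF u u' x = 0} ∪
        {x | ∃ j, 1 ≤ j ∧ j ≤ m ∧ Odd j ∧ p j = x}).ncard = m + 1 ∧
    (∀ z ∉ poleSet m p, piiF u u' z = 0 →
      Tendsto (fun x => (x - z) * backlund α u u' x) (𝓝[≠] z) (𝓝 1)) ∧
    (∀ j, 1 ≤ j → j ≤ m → Odd j →
      Tendsto (fun x => (x - p j) * backlund α u u' x) (𝓝[≠] p j)
        (𝓝 (-1))) ∧
    (∀ j, 1 ≤ j → j ≤ m → Even j →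
      Tendsto (fun x => (x - p j) * backlund α u u' x) (𝓝[≠] p j)
        (𝓝 0)) ∧
    (∃ q : Fin (m + 1) → ℝ, StrictMono q ∧
      Set.range q = {x | x ∉ poleSet m p ∧ piiF u u' x = 0} ∪
        {x | ∃ j, 1 ≤ j ∧ j ≤ m ∧ Odd j ∧ p j = x} ∧
      (∀ i : Fin (m + 1),
        Tendsto (fun x => (x - q i) * backlund α u u' x) (𝓝[≠] q i)
          (𝓝 ((-1 : ℝ) ^ (i : ℕ)))) ∧
      q 0 < p 1 ∧
      (Odd m → q (Fin.last m) = p m) ∧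
      (Even m → p m < q (Fin.last m))) := by
  have hc : 0 < 2 * α + 1 := by linarith
  have hmono : StrictMonoOn p (Icc 1 m) := fun i hi j hj hij => hp i j hi.1 hij hj.2
  have hderiv : ∀ x ∉ poleSet m p,
      HasDerivAt (piiF u u') (2 * α + 1 - 2 * u x * piiF u u' x) x :=
    fun x hx => hasDerivAt_piiF (hu x hx) (hu' x hx) (hPII x hx)
  have hzero : ∀ z ∉ poleSet m p, piiF u u' z = 0 → HasDerivAt (piiF u u') (2 * α + 1) z :=
    fun z hz hfz => by simpa [hfz] using hderiv z hz
  obtain ⟨ζ, hζ, hZ⟩ := exists_zeros_eq_of_even_gaps hmono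
    (fun x hx => (hderiv x hx).continuousAt.continuousWithinAt)
    (fun z hz hfz => ⟨_, hc, hzero z hz hfz⟩) hfbot hftop hfodd hfeven hc
  have hζZ : ∀ j ≤ m, Even j → ζ j ∈ {x | x ∉ poleSet m p ∧ piiF u u' x = 0} :=
    fun j hj heven => hZ ▸ ⟨j, hj, heven, rfl⟩
  have hlimZ : ∀ z ∉ poleSet m p, piiF u u' z = 0 →
      Tendsto (fun x => (x - z) * backlund α u u' x) (𝓝[≠] z) (𝓝 1) := fun z hz hfz =>
    tendsto_mul_backlund_of_eq_zero (hu z hz).continuousAt (hzero z hz hfz) hfz hc.ne'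
  have hlimOdd : ∀ j, 1 ≤ j → j ≤ m → Odd j →
      Tendsto (fun x => (x - p j) * backlund α u u' x) (𝓝[≠] p j) (𝓝 (-1)) :=
    fun j h1 hj hodd => by simpa [hodd.add_one.neg_one_pow] using
      tendsto_mul_backlund_of_tendsto_atTop (hpoles j h1 hj) (hfodd j h1 hj hodd)
  have hrange : range (interlace m p ζ) = {x | x ∉ poleSet m p ∧ piiF u u' x = 0} ∪
      {x | ∃ j, 1 ≤ j ∧ j ≤ m ∧ Odd j ∧ p j = x} := by
    rw [hZ, range_interlace]
  refine ⟨?_, hlimZ, hlimOdd, fun j h1 hj heven => ?_, interlace m p ζ,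
    strictMono_interlace hmono hζ, hrange,
    tendsto_mul_interlace (fun j hj heven => hlimZ _ (hζZ j hj heven).1 (hζZ j hj heven).2)
      hlimOdd, ?_, fun hodd => interlace_of_odd hodd, fun heven => ?_⟩
  · rw [← hrange, ncard_range_of_injective (strictMono_interlace hmono hζ).injective,
      Nat.card_fin]
  · have h := tendsto_mul_backlund_of_tendsto_div (α := α) (hpoles j h1 hj)
      (hfeven j h1 hj heven) (neg_ne_zero.mpr hc.ne')
    rwa [heven.add_one.neg_one_pow, div_neg, div_self hc.ne', neg_neg, add_neg_cancel] at h
  · rw [interlace_of_even Even.zero]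
    exact (hζ 0 (Nat.zero_le m) Even.zero).2 hm
  · rw [interlace_of_even heven]
    exact (hζ m le_rfl heven).1 (by omega)
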